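/- arXiv:1812.07133 — 2 statements merged into one kernel-verified Lean document; each statement's English description precedes it below -/
import Mathlib

section
/- Fix w ∈ 𝕂^{m+1} and write ξ_j = ζ_j(w). For every multi-index α ∈ ℕ^m and every k ∈ {1, …, m}, the partial derivative of the shifted Fueter monomial satisfies (∂/∂v_k)[(ζ(v) − ξ)^α] = α_k · (ζ(v) − ξ)^{α − ι_k} for all v ∈ 𝕂^{m+1}, where ι_k ∈ ℕ^m is the multi-index with j-th entry δ_{jk} (and the right-hand side is interpreted as 0 when α_k = 0). -/
open List Equiv Finset


/-- The symmetrized product of a list of elements of an algebra `A`: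
`(1/N!) ∑_{σ ∈ S_N} a_{σ(1)} ⋯ a_{σ(N)}`. -/
noncomputable def symProd (𝕜 : Type*) {A : Type*} [Field 𝕜] [Ring A] [Algebra 𝕜 A]
    (l : List A) : A :=
  (l.length.factorial : 𝕜)⁻¹ •
    ∑ σ : Equiv.Perm (Fin l.length), (List.ofFn fun i => l.get (σ i)).prod

/-- `symPow 𝕜 a α` is the symmetrized product `a_1^{α_1} × ⋯ × a_m^{α_m}`. -/
noncomputable def symPow (𝕜 : Type*) {A : Type*} [Field 𝕜] [Ring A] [Algebra 𝕜 A]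
    {m : ℕ} (a : Fin m → A) (α : Fin m → ℕ) : A :=
  symProd 𝕜 ((List.finRange m).flatMap fun i => List.replicate (α i) (a i))

/-- The Fueter variable `ζ_k(v) = v_k·1 − v_0·e_k` associated with the generators `e`. -/
def zeta {𝕜 A : Type*} [CommRing 𝕜] [Ring A] [Algebra 𝕜 A] {m : ℕ}
    (e : Fin m → A) (k : Fin m) (v : Fin (m + 1) → 𝕜) : A :=
  v k.succ • (1 : A) - v 0 • e k

section Aux

variable {𝕜 A : Type*} [Field 𝕜] [Ring A] [Algebra 𝕜 A] {β : Type*}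

/-- The index list of a multi-index. -/
def idxList {m : ℕ} (α : Fin m → ℕ) : List (Fin m) :=
  (List.finRange m).flatMap fun i => List.replicate (α i) i

lemma count_idxList {m : ℕ} (α : Fin m → ℕ) (k : Fin m) :
    (idxList α).count k = α k := by
  rw [idxList, List.count_flatMap]
  have h : ∀ i : Fin m, (List.count k ∘ fun i => List.replicate (α i) i) i
      = if i = k then α i else 0 := by
    intro i
    simp [List.count_replicate]
  rw [List.map_congr_left fun i _ => h i]
  rw [← Fin.sum_univ_def]
  simp

lemma map_idxList {m : ℕ} (α : Fin m → ℕ) (a : Fin m → A) :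
    ((List.finRange m).flatMap fun i => List.replicate (α i) (a i)) = (idxList α).map a := by
  simp [idxList, List.map_flatMap, List.map_replicate]

lemma symPow_eq_symProd {m : ℕ} (a : Fin m → A) (α : Fin m → ℕ) :
    symPow 𝕜 a α = symProd 𝕜 ((idxList α).map a) := by
  rw [symPow, map_idxList]

lemma symProd_eq {l : List A} {n : ℕ} (h : l.length = n) (g : Fin n → A)
    (hg : ∀ i : Fin n, l.get (Fin.cast h.symm i) = g i) :
    symProd 𝕜 l
      = (n.factorial : 𝕜)⁻¹ • ∑ σ : Equiv.Perm (Fin n), (List.ofFn fun i => g (σ i)).prod := by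
  subst h
  have hg' : ∀ i, g i = l.get i := fun i => (hg i).symm
  simp only [symProd, hg']

lemma symProd_ofFn {n : ℕ} (g : Fin n → A) :
    symProd 𝕜 (List.ofFn g)
      = (n.factorial : 𝕜)⁻¹ • ∑ σ : Equiv.Perm (Fin n), (List.ofFn fun i => g (σ i)).prod := by
  refine symProd_eq (List.length_ofFn : (List.ofFn g).length = n) g fun i => ?_
  simp [List.get_ofFn]

lemma exists_get_equiv {l l' : List β} (h : l.Perm l') :
    ∃ π : Fin l'.length ≃ Fin l.length, ∀ i, l'.get i = l.get (π i) := by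
  induction h with
  | nil => exact ⟨Equiv.refl _, fun i => i.elim0⟩
  | cons x h ih =>
    obtain ⟨π, hπ⟩ := ih
    refine ⟨(finSuccEquiv _).trans ((Equiv.optionCongr π).trans (finSuccEquiv _).symm),
      fun i => ?_⟩
    refine Fin.cases ?_ (fun j => ?_) i
    · simp
    · simpa using hπ j
  | swap x y t =>
    refine ⟨Equiv.swap ⟨0, by simp⟩ ⟨1, by simp⟩, fun i => ?_⟩
    rcases i with ⟨iv, hv⟩
    obtain _ | (_ | iv) := iv
    · simp [Equiv.swap_apply_def, Fin.ext_iff]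
    · simp [Equiv.swap_apply_def, Fin.ext_iff]
    · simp [Equiv.swap_apply_def, Fin.ext_iff]
  | trans h₁ h₂ ih₁ ih₂ =>
    obtain ⟨π₁, hπ₁⟩ := ih₁
    obtain ⟨π₂, hπ₂⟩ := ih₂
    exact ⟨π₂.trans π₁, fun i => (hπ₂ i).trans (hπ₁ _)⟩

lemma symProd_perm {l l' : List A} (h : l.Perm l') : symProd 𝕜 l = symProd 𝕜 l' := by
  obtain ⟨π, hπ⟩ := exists_get_equiv h
  have hlen : l'.length = l.length := h.length_eq.symm
  rw [symProd_eq (l := l) rfl (fun i => l.get i) (fun i => rfl)]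
  rw [symProd_eq (l := l') hlen (fun i => l.get (π (Fin.cast hlen.symm i))) (fun i => hπ _)]
  congr 1
  set πe : Equiv.Perm (Fin l.length) := (finCongr hlen.symm).trans π with hπe
  refine (Fintype.sum_equiv (Equiv.mulLeft πe)
    (fun σ => (List.ofFn fun i => l.get (π (Fin.cast hlen.symm (σ i)))).prod)
    (fun σ => (List.ofFn fun i => l.get (σ i)).prod) (fun σ => rfl)).symm

lemma ofFn_comp_perm {n : ℕ} (f : Fin n → β) (π : Equiv.Perm (Fin n)) :
    (List.ofFn fun i => f (π i)).Perm (List.ofFn f) := by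
  classical
  have h1 : ((List.finRange n).map π).Perm (List.finRange n) := by
    refine List.perm_of_nodup_nodup_toFinset_eq
      ((List.nodup_finRange n).map π.injective) (List.nodup_finRange n) ?_
    ext x
    simp only [List.mem_toFinset, List.mem_map, List.mem_finRange, true_and, iff_true]
    exact ⟨π.symm x, π.apply_symm_apply x⟩
  have h2 := h1.map f
  rw [List.map_map] at h2
  simpa [List.ofFn_eq_map, Function.comp_def] using h2

lemma eraseIdx_ofFn {n : ℕ} (g : Fin (n + 1) → β) (p : Fin (n + 1)) :
    (List.ofFn g).eraseIdx (p : ℕ) = List.ofFn (g ∘ p.succAbove) := by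
  induction n with
  | zero =>
    have hp : p = 0 := Fin.fin_one_eq_zero p
    subst hp
    simp [List.ofFn_succ]
  | succ n ih =>
    refine Fin.cases ?_ (fun q => ?_) p
    · simp [List.ofFn_succ]
    · rw [List.ofFn_succ, show ((q.succ : Fin (n + 2)) : ℕ) = (q : ℕ) + 1 from rfl,
        List.eraseIdx_cons_succ, ih (fun i => g i.succ) q]
      rw [List.ofFn_succ (f := g ∘ (q.succ).succAbove)]
      congr 1
      simp [Function.comp_def, Fin.succ_succAbove_succ]

lemma sum_ite_eq_count [DecidableEq β] {n : ℕ} (g : Fin n → β) (k : β) :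
    (∑ j : Fin n, if g j = k then 1 else 0) = (List.ofFn g).count k := by
  induction n with
  | zero => simp
  | succ n ih =>
    rw [Fin.sum_univ_succ, List.ofFn_succ, ih (fun i => g i.succ), List.count_cons]
    by_cases h : g 0 = k <;> simp [h, Nat.add_comm]

lemma key_sum {n : ℕ} (b : Fin (n + 1) → A) (s : Fin (n + 1) → Prop) [DecidablePred s] :
    (∑ σ : Equiv.Perm (Fin (n + 1)), ∑ p : Fin (n + 1),
        if s (σ p) then ((List.ofFn fun q => b (σ q)).eraseIdx (p : ℕ)).prod else 0)
    = (n + 1) • ∑ j : Fin (n + 1), (if s j then ∑ ρ : Equiv.Perm (Fin n),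
        (List.ofFn fun i : Fin n => b (Equiv.swap 0 j (ρ i).succ)).prod else 0) := by
  have h1 : ∀ (σ : Equiv.Perm (Fin (n + 1))) (p : Fin (n + 1)),
      ((List.ofFn fun q => b (σ q)).eraseIdx (p : ℕ))
        = List.ofFn fun i : Fin n => b (σ (p.succAbove i)) := fun σ p => eraseIdx_ofFn _ p
  simp only [h1]
  rw [Finset.sum_comm]
  have h2 : ∀ p : Fin (n + 1),
      (∑ σ : Equiv.Perm (Fin (n + 1)),
        if s (σ p) then (List.ofFn fun i : Fin n => b (σ (p.succAbove i))).prod else 0)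
      = ∑ τ : Equiv.Perm (Fin (n + 1)),
          if s (τ 0) then (List.ofFn fun i : Fin n => b (τ i.succ)).prod else 0 := by
    intro p
    have hE0 : ((finSuccEquiv n).trans (finSuccEquiv' p).symm) 0 = p := by
      simp [finSuccEquiv_zero, finSuccEquiv'_symm_none]
    have hEs : ∀ i : Fin n,
        ((finSuccEquiv n).trans (finSuccEquiv' p).symm) i.succ = p.succAbove i := by
      intro i
      simp [finSuccEquiv_succ, finSuccEquiv'_symm_some]
    refine Fintype.sum_equiv (Equiv.mulRight ((finSuccEquiv n).trans (finSuccEquiv' p).symm))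
      _ _ fun σ => ?_
    simp [Equiv.Perm.mul_apply, hE0, hEs]
  simp only [h2]
  rw [Finset.sum_const, Finset.card_univ, Fintype.card_fin]
  congr 1
  rw [← Equiv.sum_comp (Equiv.Perm.decomposeFin.symm)
      (fun τ => if s (τ 0) then (List.ofFn fun i : Fin n => b (τ i.succ)).prod else 0)]
  rw [Fintype.sum_prod_type]
  refine Finset.sum_congr rfl fun j _ => ?_
  simp only [Equiv.Perm.decomposeFin_symm_apply_zero, Equiv.Perm.decomposeFin_symm_apply_succ]
  by_cases hs : s j
  · simp [hs]
  · simp [hs]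

lemma key_cons {m : ℕ} [CharZero 𝕜] (a : Fin m → A) (k x : Fin m) (L' : List (Fin m)) :
    (∑ σ : Equiv.Perm (Fin (x :: L').length), ∑ p : Fin (x :: L').length,
      if (x :: L').get (σ p) = k
      then ((List.ofFn fun q => a ((x :: L').get (σ q))).eraseIdx (p : ℕ)).prod else 0)
    = ((x :: L').count k * (x :: L').length) •
        ((L'.length.factorial : 𝕜) • symProd 𝕜 (((x :: L').erase k).map a)) := by
  classical
  have hofn : (List.ofFn fun q : Fin (L'.length + 1) => (x :: L').get q) = x :: L' :=
    List.ofFn_get (x :: L')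
  refine Eq.trans (key_sum (b := fun q : Fin (L'.length + 1) => a ((x :: L').get q))
      (s := fun q : Fin (L'.length + 1) => (x :: L').get q = k)) ?_
  have hinner : ∀ j : Fin (L'.length + 1), (x :: L').get j = k →
      (∑ ρ : Equiv.Perm (Fin L'.length),
          (List.ofFn fun i : Fin L'.length =>
            a ((x :: L').get (Equiv.swap 0 j (ρ i).succ))).prod)
        = (L'.length.factorial : 𝕜) • symProd 𝕜 (((x :: L').erase k).map a) := by
    intro j hj
    have hfact : (L'.length.factorial : 𝕜) ≠ 0 := Nat.cast_ne_zero.mpr (Nat.factorial_ne_zero _)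
    have hsym := symProd_ofFn (𝕜 := 𝕜)
      (fun i : Fin L'.length => a ((x :: L').get (Equiv.swap 0 j i.succ)))
    have h3 : (∑ ρ : Equiv.Perm (Fin L'.length),
          (List.ofFn fun i : Fin L'.length =>
            a ((x :: L').get (Equiv.swap 0 j (ρ i).succ))).prod)
        = (L'.length.factorial : 𝕜) • symProd 𝕜
            (List.ofFn fun i : Fin L'.length => a ((x :: L').get (Equiv.swap 0 j i.succ))) := by
      rw [hsym, smul_inv_smul₀ hfact]
    rw [h3]
    congr 1
    have hu : (List.ofFn fun i : Fin L'.length => a ((x :: L').get (Equiv.swap 0 j i.succ)))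
        = (List.ofFn fun i : Fin L'.length => (x :: L').get (Equiv.swap 0 j i.succ)).map a := by
      rw [List.map_ofFn]
      rfl
    rw [hu]
    refine symProd_perm (List.Perm.map a ?_)
    have hk : k ∈ x :: L' := by
      rw [← hj]
      exact List.get_mem _ _
    have hperm0 : (List.ofFn fun q : Fin (L'.length + 1) => (x :: L').get (Equiv.swap 0 j q)).Perm
        (List.ofFn fun q : Fin (L'.length + 1) => (x :: L').get q) :=
      ofFn_comp_perm _ (Equiv.swap 0 j)
    have hcons : (List.ofFn fun q : Fin (L'.length + 1) => (x :: L').get (Equiv.swap 0 j q))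
        = k :: List.ofFn (fun i : Fin L'.length => (x :: L').get (Equiv.swap 0 j i.succ)) := by
      rw [List.ofFn_succ, Equiv.swap_apply_left, hj]
    rw [hcons, hofn] at hperm0
    exact (hperm0.trans (List.perm_cons_erase hk)).cons_inv
  have hsum : (∑ j : Fin (L'.length + 1), if (x :: L').get j = k then
        (∑ ρ : Equiv.Perm (Fin L'.length),
          (List.ofFn fun i : Fin L'.length =>
            a ((x :: L').get (Equiv.swap 0 j (ρ i).succ))).prod) else 0)
      = ((x :: L').count k) •
          ((L'.length.factorial : 𝕜) • symProd 𝕜 (((x :: L').erase k).map a)) := by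
    rw [show ((x :: L').count k) = (∑ j : Fin (L'.length + 1),
        if (x :: L').get j = k then 1 else 0) by
      rw [sum_ite_eq_count (fun q : Fin (L'.length + 1) => (x :: L').get q) k, hofn]]
    rw [Finset.sum_smul]
    refine Finset.sum_congr rfl fun j _ => ?_
    by_cases hj : (x :: L').get j = k
    · rw [if_pos hj, if_pos hj, hinner j hj, one_smul]
    · rw [if_neg hj, if_neg hj, zero_smul]
  rw [hsum, smul_smul, List.length_cons, Nat.mul_comm]

lemma key {m : ℕ} [CharZero 𝕜] (a : Fin m → A) (α : Fin m → ℕ) (k : Fin m) :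
    (((idxList α).length.factorial : 𝕜)⁻¹ •
      ∑ σ : Equiv.Perm (Fin (idxList α).length), ∑ p : Fin (idxList α).length,
        if (idxList α).get (σ p) = k
        then ((List.ofFn fun q => a ((idxList α).get (σ q))).eraseIdx (p : ℕ)).prod else 0)
    = α k • symPow 𝕜 a (α - Pi.single k 1) := by
  classical
  have hcount := count_idxList α k
  rw [symPow_eq_symProd]
  rcases hL : idxList α with _ | ⟨x, L'⟩
  · rw [hL] at hcount
    simp only [List.count_nil] at hcount
    rw [← hcount, Finset.sum_eq_zero fun σ _ => Finset.sum_eq_zero fun p _ => p.elim0]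
    simp
  · rw [hL] at hcount
    rw [key_cons (𝕜 := 𝕜) a k x L']
    by_cases hk : α k = 0
    · rw [hcount, hk, Nat.zero_mul, zero_smul, smul_zero, zero_smul]
    · have hperm : ((x :: L').erase k).Perm (idxList (α - Pi.single k 1)) := by
        rw [List.perm_iff_count]
        intro j
        rw [count_idxList (α - Pi.single k 1) j, List.count_erase]
        have hcj : (x :: L').count j = α j := by rw [← hL, count_idxList]
        rw [hcj]
        simp only [Pi.sub_apply, Pi.single_apply, beq_iff_eq]
        by_cases hjk : j = k
        · subst hjk
          simp
        · simp [hjk, Ne.symm hjk]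
      have hsym : symProd 𝕜 (((x :: L').erase k).map a)
          = symProd 𝕜 ((idxList (α - Pi.single k 1)).map a) := symProd_perm (hperm.map a)
      rw [hsym, hcount, List.length_cons]
      rw [← Nat.cast_smul_eq_nsmul 𝕜 (α k * (L'.length + 1)), smul_smul, smul_smul,
        ← Nat.cast_smul_eq_nsmul 𝕜 (α k)]
      congr 1
      have hne : ((L'.length + 1).factorial : 𝕜) ≠ 0 :=
        Nat.cast_ne_zero.mpr (Nat.factorial_ne_zero _)
      have hne' : ((L'.length).factorial : 𝕜) ≠ 0 :=
        Nat.cast_ne_zero.mpr (Nat.factorial_ne_zero _)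
      have h1 : ((L'.length + 1 : ℕ) : 𝕜) ≠ 0 := Nat.cast_ne_zero.mpr (Nat.succ_ne_zero _)
      have hgen : ∀ aa bb cc : 𝕜, aa ≠ 0 → bb ≠ 0 → (aa * bb)⁻¹ * (cc * aa) * bb = cc := by
        intro aa bb cc ha hb
        field_simp
      rw [Nat.factorial_succ, Nat.cast_mul, Nat.cast_mul]
      exact hgen _ _ _ h1 hne' 

end Aux


section Analytic

variable {𝕜 A : Type*} [RCLike 𝕜] [NormedRing A] [NormedAlgebra 𝕜 A] {m : ℕ}

lemma hasFDerivAt_factor (e : Fin m → A) (w : Fin (m + 1) → 𝕜) (j : Fin m)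
    (v : Fin (m + 1) → 𝕜) :
    HasFDerivAt (fun u => zeta e j u - zeta e j w)
      ((ContinuousLinearMap.proj (R := 𝕜) (φ := fun _ : Fin (m + 1) => 𝕜) j.succ).smulRight (1 : A)
        - (ContinuousLinearMap.proj (0 : Fin (m + 1))).smulRight (e j)) v := by
  have h1 := ((ContinuousLinearMap.proj (R := 𝕜) (φ := fun _ : Fin (m + 1) => 𝕜) j.succ).smulRight
      (1 : A) - (ContinuousLinearMap.proj (0 : Fin (m + 1))).smulRight (e j)).hasFDerivAt (x := v)
  have h2 := h1.sub_const (zeta e j w)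
  refine HasFDerivAt.congr_of_eventuallyEq h2 (Filter.Eventually.of_forall fun u => ?_)
  simp [zeta, ContinuousLinearMap.sub_apply, ContinuousLinearMap.smulRight_apply,
    ContinuousLinearMap.proj_apply]

set_option maxHeartbeats 1000000 in
lemma fderiv_symPow_eval (e : Fin m → A) (w : Fin (m + 1) → 𝕜) (α : Fin m → ℕ) (k : Fin m)
    (v : Fin (m + 1) → 𝕜) :
    fderiv 𝕜 (fun u => symPow 𝕜 (fun j => zeta e j u - zeta e j w) α) v (Pi.single k.succ 1)
      = ((idxList α).length.factorial : 𝕜)⁻¹ •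
        ∑ σ : Equiv.Perm (Fin (idxList α).length), ∑ p : Fin (idxList α).length,
          if (idxList α).get (σ p) = k
          then ((List.ofFn fun q =>
              zeta e ((idxList α).get (σ q)) v - zeta e ((idxList α).get (σ q)) w).eraseIdx
                (p : ℕ)).prod
          else 0 := by
  classical
  set l := idxList α with hl
  have hrepr : ∀ u : Fin (m + 1) → 𝕜,
      symPow 𝕜 (fun j => zeta e j u - zeta e j w) α
        = (l.length.factorial : 𝕜)⁻¹ • ∑ σ : Equiv.Perm (Fin l.length),
            (List.ofFn fun q => zeta e (l.get (σ q)) u - zeta e (l.get (σ q)) w).prod := by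
    intro u
    rw [symPow_eq_symProd]
    refine symProd_eq (by simp : (l.map fun j => zeta e j u - zeta e j w).length = l.length)
      (fun q => zeta e (l.get q) u - zeta e (l.get q) w) fun i => ?_
    simp [List.get_eq_getElem, List.getElem_map]
  have hderiv : ∀ σ : Equiv.Perm (Fin l.length),
      HasFDerivAt
        (fun u => (List.ofFn fun q => zeta e (l.get (σ q)) u - zeta e (l.get (σ q)) w).prod)
        (∑ i : Fin (List.finRange l.length).length,
          (((List.finRange l.length).take (i : ℕ)).map
              (fun q => zeta e (l.get (σ q)) v - zeta e (l.get (σ q)) w)).prod •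
            ContinuousLinearMap.smulRight
              ((ContinuousLinearMap.proj (R := 𝕜) (φ := fun _ : Fin (m + 1) => 𝕜)
                  ((l.get (σ ((List.finRange l.length)[(i : ℕ)]))).succ)).smulRight (1 : A)
                - (ContinuousLinearMap.proj (0 : Fin (m + 1))).smulRight
                    (e (l.get (σ ((List.finRange l.length)[(i : ℕ)])))))
              (((List.finRange l.length).drop ((i : ℕ) + 1)).map
                (fun q => zeta e (l.get (σ q)) v - zeta e (l.get (σ q)) w)).prod) v := by
    intro σ
    have h := HasFDerivAt.list_prod' (𝕜 := 𝕜) (l := List.finRange l.length)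
      (f := fun q u => zeta e (l.get (σ q)) u - zeta e (l.get (σ q)) w)
      (f' := fun q => (ContinuousLinearMap.proj (R := 𝕜) (φ := fun _ : Fin (m + 1) => 𝕜)
          ((l.get (σ q)).succ)).smulRight (1 : A)
        - (ContinuousLinearMap.proj (0 : Fin (m + 1))).smulRight (e (l.get (σ q))))
      (x := v) (fun q _ => hasFDerivAt_factor e w _ v)
    simp only [← List.ofFn_eq_map] at h
    refine h.congr_fderiv (Finset.sum_congr rfl fun i _ => ?_)
    congr 1
  have hF := ((HasFDerivAt.fun_sum fun (σ : Equiv.Perm (Fin l.length)) (_ : σ ∈ Finset.univ) =>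
      hderiv σ).const_smul ((l.length.factorial : 𝕜)⁻¹)).congr_of_eventuallyEq
    (Filter.Eventually.of_forall fun u => hrepr u)
  rw [hF.fderiv]
  rw [ContinuousLinearMap.smul_apply, ContinuousLinearMap.sum_apply]
  refine congrArg (fun z : A => ((l.length.factorial : 𝕜)⁻¹ • z)) ?_
  refine Finset.sum_congr rfl fun σ _ => ?_
  rw [ContinuousLinearMap.sum_apply]
  refine Fintype.sum_equiv (finCongr (List.length_finRange (n := l.length))) _ _ fun i => ?_
  have hgel : (List.finRange l.length)[(i : ℕ)] = finCongr (List.length_finRange (n := l.length)) i := by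
    simp [List.getElem_finRange, finCongr_apply, Fin.ext_iff]
  rw [ContinuousLinearMap.smul_apply, ContinuousLinearMap.smulRight_apply,
    ContinuousLinearMap.sub_apply, ContinuousLinearMap.smulRight_apply,
    ContinuousLinearMap.smulRight_apply, ContinuousLinearMap.proj_apply,
    ContinuousLinearMap.proj_apply, hgel]
  rw [Pi.single_eq_of_ne (Fin.succ_ne_zero k).symm, zero_smul, sub_zero, Pi.single_apply]
  have hprod : (((List.finRange l.length).take (i : ℕ)).map
        (fun q => zeta e (l.get (σ q)) v - zeta e (l.get (σ q)) w)).prod *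
      (((List.finRange l.length).drop ((i : ℕ) + 1)).map
        (fun q => zeta e (l.get (σ q)) v - zeta e (l.get (σ q)) w)).prod
      = ((List.ofFn fun q =>
          zeta e (l.get (σ q)) v - zeta e (l.get (σ q)) w).eraseIdx
            ((finCongr (List.length_finRange (n := l.length)) i : Fin l.length) : ℕ)).prod := by
    rw [List.eraseIdx_eq_take_drop_succ, List.prod_append, List.ofFn_eq_map, List.map_take,
      List.map_drop]
    rfl
  by_cases hc : l.get (σ (finCongr (List.length_finRange (n := l.length)) i)) = k
  · rw [if_pos hc, if_pos (by rw [hc])]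
    rw [← hprod]
    rw [one_smul, smul_eq_mul, smul_eq_mul, one_mul]
  · rw [if_neg hc, if_neg (fun hcon => hc (Fin.succ_injective _ hcon))]
    rw [zero_smul, zero_smul, smul_zero]

end Analytic

/-- Derivative of shifted Fueter monomials:
`∂/∂v_k (ζ(v) − ξ)^α = α_k (ζ(v) − ξ)^{α − ι_k}`, where `ξ = ζ(w)`. -/
theorem stmt6 {𝕜 A : Type*} [RCLike 𝕜] [NormedRing A] [NormedAlgebra 𝕜 A] {m : ℕ}
    (e : Fin m → A) (w : Fin (m + 1) → 𝕜) (α : Fin m → ℕ) (k : Fin m)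
    (v : Fin (m + 1) → 𝕜) :
    fderiv 𝕜 (fun u => symPow 𝕜 (fun j => zeta e j u - zeta e j w) α) v
        (Pi.single k.succ 1)
      = α k • symPow 𝕜 (fun j => zeta e j v - zeta e j w) (α - Pi.single k 1) := by
  rw [fderiv_symPow_eval]
  exact key (fun j => zeta e j v - zeta e j w) α k
end

section
/- Let R be a (possibly noncommutative) unital ℚ-algebra and let A_1, …, A_m ∈ R. In the ring of formal power series in m commuting variables X_1, …, X_m with coefficients in R, the element 1 − Σ_{k=1}^m X_k A_k is a unit, and the coefficient of X^α in its inverse equals (|α|!/α!) · A^α for every α ∈ ℕ^m, where A^α = A_1^{α_1} × ⋯ × A_m^{α_m} is the symmetrized product, α! = α_1!⋯α_m! and |α| = α_1 + ⋯ + α_m. -/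
/-!
Expanding `(1 - ∑ₖ Xₖ Aₖ)⁻¹ = ∑ₙ (∑ₖ Xₖ Aₖ)ⁿ`, the coefficient of `X^α` is the sum of
`A_{w₁} ⋯ A_{wₙ}` over all words `w` of length `|α|` in which each letter `k` occurs `αₖ` times.
The constant coefficient `1` makes `1 - ∑ₖ Xₖ Aₖ` a unit, so a right inverse is its inverse, and
this series is one: split off the first letter of each word.
On the other side, composing one such word with all permutations of its positions hits every
such word exactly `α!` times (the order of its stabilizer), so the sum over `S_{|α|}` in the
symmetrized product is `α!` times the word sum.
-/

open Equiv Finset Nat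

section PermComp

variable {ι κ : Type*} [Fintype ι] [DecidableEq κ]

lemma card_fiber_comp_perm (w : ι → κ) (σ : Perm ι) (k : κ) :
    Fintype.card {i // (w ∘ σ) i = k} = Fintype.card {i // w i = k} :=
  Fintype.card_congr (σ.subtypeEquiv fun _ => Iff.rfl)

lemma exists_perm_comp_eq {v w : ι → κ}
    (h : ∀ k, Fintype.card {i // v i = k} = Fintype.card {i // w i = k}) :
    ∃ τ : Perm ι, w ∘ τ = v :=
  ⟨Equiv.ofFiberEquiv fun k => Fintype.equivOfCardEq (h k), funext (Equiv.ofFiberEquiv_map _)⟩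

variable [DecidableEq ι]

lemma card_perm_comp_eq_of_comp_eq {v w : ι → κ} {τ : Perm ι} (hτ : w ∘ τ = v) :
    Fintype.card {σ : Perm ι // w ∘ σ = v} = Fintype.card {σ : Perm ι // w ∘ σ = w} := by
  subst hτ
  refine Fintype.card_congr ((Equiv.mulRight τ⁻¹).subtypeEquiv fun σ => ?_)
  rw [coe_mulRight, Perm.coe_mul, Perm.inv_def, ← Function.comp_assoc, Equiv.comp_symm_eq]

theorem sum_perm_comp [Fintype κ] {M : Type*} [AddCommMonoid M] (w : ι → κ) (F : (ι → κ) → M) :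
    ∑ σ : Perm ι, F (w ∘ σ) = (∏ k, (Fintype.card {i // w i = k})!) •
      ∑ v : ι → κ with ∀ k, Fintype.card {i // v i = k} = Fintype.card {i // w i = k}, F v := by
  rw [← Finset.sum_fiberwise univ (fun σ : Perm ι => w ∘ σ), Finset.sum_filter, Finset.smul_sum]
  refine Finset.sum_congr rfl fun v _ => ?_
  rw [Finset.sum_congr rfl fun σ hσ => congrArg F (Finset.mem_filter.mp hσ).2, Finset.sum_const,
    ← Fintype.card_subtype]
  split_ifs with hv
  · obtain ⟨τ, hτ⟩ := exists_perm_comp_eq hv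
    rw [card_perm_comp_eq_of_comp_eq hτ, DomMulAct.stabilizer_card]
  · rw [Fintype.card_eq_zero_iff.mpr ⟨fun ⟨σ, hσ⟩ => hv fun k => hσ ▸ card_fiber_comp_perm w σ k⟩,
      zero_smul, smul_zero]

end PermComp

section Words

variable {R κ : Type*} [Ring R] {n : ℕ}

noncomputable def wordCount (w : Fin n → κ) : κ →₀ ℕ := ∑ i, Finsupp.single (w i) 1

def wordProd (A : κ → R) (w : Fin n → κ) : R := (List.ofFn fun i => A (w i)).prod

noncomputable def wordSum [Fintype κ] [DecidableEq κ] (A : κ → R) (n : ℕ) (α : κ →₀ ℕ) : R :=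
  ∑ w : Fin n → κ with wordCount w = α, wordProd A w

lemma wordCount_apply [DecidableEq κ] (w : Fin n → κ) (k : κ) :
    wordCount w k = Fintype.card {i // w i = k} := by
  simp [wordCount, Finsupp.single_apply, Fintype.card_subtype, Finset.sum_boole]

lemma wordCount_cons (k : κ) (w : Fin n → κ) :
    wordCount (Fin.cons k w : Fin (n + 1) → κ) = Finsupp.single k 1 + wordCount w := by
  simp only [wordCount, Fin.sum_univ_succ, Fin.cons_zero, Fin.cons_succ]

lemma wordProd_cons (A : κ → R) (k : κ) (w : Fin n → κ) :
    wordProd A (Fin.cons k w : Fin (n + 1) → κ) = A k * wordProd A w := by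
  simp [wordProd, List.ofFn_succ]

variable [Fintype κ] [DecidableEq κ]

lemma wordSum_zero (A : κ → R) (α : κ →₀ ℕ) : wordSum A 0 α = if α = 0 then 1 else 0 := by
  rw [wordSum, Finset.sum_filter, Fintype.sum_unique]
  simp [wordCount, wordProd, eq_comm]

lemma wordSum_succ (A : κ → R) (n : ℕ) (α : κ →₀ ℕ) :
    wordSum A (n + 1) α = ∑ k, if Finsupp.single k 1 ≤ α
      then A k * wordSum A n (α - Finsupp.single k 1) else 0 := by
  rw [wordSum, Finset.sum_filter, ← (Fin.consEquiv fun _ => κ).sum_comp, Fintype.sum_prod_type]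
  refine Finset.sum_congr rfl fun k _ => ?_
  simp only [Fin.consEquiv, Equiv.coe_fn_mk, wordCount_cons, wordProd_cons]
  split_ifs with hk
  · rw [wordSum, Finset.sum_filter, Finset.mul_sum]
    refine Finset.sum_congr rfl fun w _ => ?_
    simp only [add_comm (Finsupp.single k 1), ← eq_tsub_iff_add_eq_of_le hk, mul_ite, mul_zero]
  · exact Finset.sum_eq_zero fun w _ => if_neg fun h : _ = α => hk (h ▸ le_self_add)

end Words

section PowerSeries

open MvPowerSeries

variable {R κ : Type*} [Ring R]

lemma X_mul_C_eq_monomial (k : κ) (a : R) :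
    (X k * C a : MvPowerSeries κ R) = monomial (Finsupp.single k 1) a := by
  rw [X_def, ← monomial_zero_eq_C_apply, monomial_mul_monomial, add_zero, one_mul]

variable [Fintype κ] [DecidableEq κ]

noncomputable def wordSeries (A : κ → R) : MvPowerSeries κ R := fun α => wordSum A α.degree α

lemma coeff_wordSeries (A : κ → R) (α : κ →₀ ℕ) :
    coeff α (wordSeries A) = wordSum A α.degree α := rfl

lemma coeff_wordSeries_of_ne_zero (A : κ → R) {α : κ →₀ ℕ} (hα : α ≠ 0) :
    coeff α (wordSeries A) = ∑ k, if Finsupp.single k 1 ≤ α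
      then A k * coeff (α - Finsupp.single k 1) (wordSeries A) else 0 := by
  obtain ⟨n, hn⟩ := Nat.exists_eq_succ_of_ne_zero ((Finsupp.degree_eq_zero_iff α).not.mpr hα)
  rw [coeff_wordSeries, hn, wordSum_succ]
  refine Finset.sum_congr rfl fun k _ => if_ctx_congr Iff.rfl (fun hk => ?_) fun _ => rfl
  have hdeg := congrArg Finsupp.degree (add_tsub_cancel_of_le hk)
  rw [map_add, Finsupp.degree_single, hn] at hdeg
  have hdeg' : (α - Finsupp.single k 1).degree = n := by omega
  rw [coeff_wordSeries, hdeg']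

theorem one_sub_sum_X_mul_C_mul_wordSeries (A : κ → R) :
    (1 - ∑ k, X k * C (A k)) * wordSeries A = 1 := by
  ext α
  simp only [sub_mul, one_mul, Finset.sum_mul, X_mul_C_eq_monomial, map_sub, map_sum,
    coeff_monomial_mul, coeff_one]
  split_ifs with hα
  · subst hα
    simp [coeff_wordSeries, wordSum_zero]
  · rw [coeff_wordSeries_of_ne_zero A hα, sub_self]

end PowerSeries

section SymmetrizedProduct

variable {𝕜 R κ : Type*} [Field 𝕜] [Ring R] [Algebra 𝕜 R] [Fintype κ] [DecidableEq κ]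

theorem symProd_map (A : κ → R) (l : List κ) :
    symProd 𝕜 (l.map A) = ((l.length)! : 𝕜)⁻¹ •
      (∏ k, (l.count k)!) • wordSum A l.length (Multiset.toFinsupp l) := by
  have hlen : (l.map A).length = l.length := List.length_map A
  let w : Fin (l.map A).length → κ := fun i => l[i.1]'(hlen ▸ i.2)
  have hprod : ∀ σ : Perm (Fin (l.map A).length),
      (List.ofFn fun i => (l.map A).get (σ i)).prod = wordProd A (w ∘ σ) := fun σ => by
    simp [wordProd, w]
  have hfiber : ∀ k, Fintype.card {i // w i = k} = l.count k := fun k => by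
    rw [Fintype.card_subtype]
    exact Fin.card_filter_univ_eq_vector_get_eq_count k ⟨l, hlen.symm⟩
  have hcount : ∀ v : Fin (l.map A).length → κ,
      (∀ k, Fintype.card {i // v i = k} = Fintype.card {i // w i = k}) ↔
        wordCount v = Multiset.toFinsupp l := fun v => by
    simp only [hfiber, Finsupp.ext_iff, wordCount_apply, Multiset.toFinsupp_apply,
      Multiset.coe_count]
  rw [symProd, Finset.sum_congr rfl fun σ _ => hprod σ, sum_perm_comp, Finset.filter_congr
    fun v _ => hcount v, ← wordSum]
  simp only [hfiber, hlen]

variable {m : ℕ}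

def letterList (α : Fin m → ℕ) : List (Fin m) :=
  (List.finRange m).flatMap fun i => List.replicate (α i) i

lemma count_letterList (α : Fin m → ℕ) (k : Fin m) : (letterList α).count k = α k := by
  simp [letterList, List.count_flatMap, List.count_replicate, ← Fin.sum_univ_def]

lemma length_letterList (α : Fin m → ℕ) : (letterList α).length = ∑ i, α i := by
  simp [letterList, List.length_flatMap, ← Fin.sum_univ_def]

lemma symPow_eq_symProd_map (A : Fin m → R) (α : Fin m → ℕ) :
    symPow 𝕜 A α = symProd 𝕜 ((letterList α).map A) := by
  simp [symPow, letterList, List.map_flatMap, List.map_replicate]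

theorem multinomial_smul_symPow [CharZero 𝕜] (A : Fin m → R) (α : Fin m →₀ ℕ) :
    (((∑ i, α i)! : 𝕜) / ∏ i, ((α i)! : 𝕜)) • symPow 𝕜 A α = wordSum A α.degree α := by
  have hα : Multiset.toFinsupp (letterList α : Multiset (Fin m)) = α := by
    ext k
    rw [Multiset.toFinsupp_apply, Multiset.coe_count, count_letterList]
  rw [symPow_eq_symProd_map, symProd_map, hα, length_letterList, ← Finsupp.degree_eq_sum,
    ← Nat.cast_smul_eq_nsmul 𝕜, smul_smul, smul_smul]
  refine (congrArg (· • _) ?_).trans (one_smul 𝕜 _)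
  have hdeg : ((α.degree)! : 𝕜) ≠ 0 := by exact_mod_cast factorial_ne_zero _
  have hprod : ∏ i, ((α i)! : 𝕜) ≠ 0 :=
    prod_ne_zero_iff.mpr fun i _ => by exact_mod_cast factorial_ne_zero _
  push_cast [count_letterList]
  field_simp

end SymmetrizedProduct

/-- In the ring of formal power series in `m` commuting variables over a
(noncommutative) unital ℚ-algebra `R`, the element `1 − ∑_k X_k A_k` is a unit and
the coefficient of `X^α` in its inverse is `(|α|!/α!) A^α` (symmetrized product). -/
theorem stmt9 {R : Type*} [Ring R] [Algebra ℚ R] {m : ℕ} (A : Fin m → R) :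
    IsUnit ((1 : MvPowerSeries (Fin m) R) -
      ∑ k, MvPowerSeries.X k * MvPowerSeries.C (A k)) ∧
    ∀ α : Fin m →₀ ℕ,
      MvPowerSeries.coeff α
          (Ring.inverse ((1 : MvPowerSeries (Fin m) R) -
            ∑ k, MvPowerSeries.X k * MvPowerSeries.C (A k)))
        = (((∑ i, α i).factorial : ℚ) / ∏ i, ((α i).factorial : ℚ)) •
            symPow ℚ A (α : Fin m → ℕ) := by
  have hunit : IsUnit ((1 : MvPowerSeries (Fin m) R) -
      ∑ k, MvPowerSeries.X k * MvPowerSeries.C (A k)) :=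
    MvPowerSeries.isUnit_iff_constantCoeff.mpr (by simp)
  have hinv := (Ring.inverse_mul_eq_iff_eq_mul _ 1 _ hunit).mpr
    (one_sub_sum_X_mul_C_mul_wordSeries A).symm
  refine ⟨hunit, fun α => ?_⟩
  rw [← mul_one (Ring.inverse _), hinv, coeff_wordSeries, multinomial_smul_symPow]
end
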